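/- arXiv:2212.02086 — 2 statements merged into one kernel-verified Lean document; each statement's English description precedes it below -/
import Mathlib

section
/- As p → N (with p < N), the quantity M_p := |B| + [((N−p)/(N(p−1))) α_p]^{N(p−1)/(N−p)} · S_p^{−p*} converges to |B| (1 + e^{Σ_{k=1}^{N−1} 1/k}). -/
open Real MeasureTheory Filter Topology

noncomputable section

abbrev Euc (N : ℕ) := EuclideanSpace ℝ (Fin N)

/-- The open unit ball `B` in `ℝ^N`. -/
def unitBall (N : ℕ) : Set (Euc N) := Metric.ball 0 1

/-- `|B|`, the Lebesgue measure of the unit ball. -/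
def volB (N : ℕ) : ℝ := (volume (unitBall N)).toReal

/-- `ω_{N-1}`, the surface measure of the unit sphere in `ℝ^N` (equal to `N |B|`). -/
def sphArea (N : ℕ) : ℝ := N * volB N

/-- `α_N = N ω_{N-1}^{1/(N-1)}`. -/
def alphaN (N : ℕ) : ℝ := N * sphArea N ^ (1 / ((N : ℝ) - 1))

/-- `α_p = (α_N^{(N-1)/N} |B|^{1/p - 1/N})^{p/(p-1)}`. -/
def alphaP (N : ℕ) (p : ℝ) : ℝ :=
  (alphaN N ^ (((N : ℝ) - 1) / N) * volB N ^ (1 / p - 1 / (N : ℝ))) ^ (p / (p - 1))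

/-- The critical Sobolev exponent `p* = Np/(N-p)`. -/
def pstar (N : ℕ) (p : ℝ) : ℝ := N * p / ((N : ℝ) - p)

/-- `F_p(s) = [1 + ((N-p)/(N(p-1))) α_p |s|^{p/(p-1)}]^{N(p-1)/(N-p)}`. -/
def Fp (N : ℕ) (p : ℝ) (s : ℝ) : ℝ :=
  (1 + (((N : ℝ) - p) / (N * (p - 1))) * alphaP N p * |s| ^ (p / (p - 1))) ^
    ((N : ℝ) * (p - 1) / ((N : ℝ) - p))

/-- A smooth function compactly supported in the unit ball. -/
def SmoothCptSupp (N : ℕ) (u : Euc N → ℝ) : Prop :=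
  ContDiff ℝ (⊤ : ℕ∞) u ∧ HasCompactSupport u ∧ tsupport u ⊆ unitBall N

/-- `u ∈ W^{1,p}_0(B)` with (weak) gradient `Du`: `u` together with `Du` is the limit, in the
`W^{1,p}` norm, of a sequence of smooth functions compactly supported in `B`. -/
def MemW1p0 (N : ℕ) (p : ℝ) (u : Euc N → ℝ) (Du : Euc N → Euc N) : Prop :=
  AEStronglyMeasurable u (volume.restrict (unitBall N)) ∧
  AEStronglyMeasurable Du (volume.restrict (unitBall N)) ∧
  ∃ v : ℕ → Euc N → ℝ, (∀ k, SmoothCptSupp N (v k)) ∧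
    Tendsto (fun k => eLpNorm (fun x => v k x - u x) (ENNReal.ofReal p)
      (volume.restrict (unitBall N))) atTop (nhds 0) ∧
    Tendsto (fun k => eLpNorm (fun x => gradient (v k) x - Du x) (ENNReal.ofReal p)
      (volume.restrict (unitBall N))) atTop (nhds 0)

/-- A radially symmetric function. -/
def Radial (N : ℕ) (u : Euc N → ℝ) : Prop := ∀ x y : Euc N, ‖x‖ = ‖y‖ → u x = u y

/-- A concentrating sequence: a member of the class `X_p`. -/
def ConcSeq (N : ℕ) (p : ℝ) (u : ℕ → Euc N → ℝ) (Du : ℕ → Euc N → Euc N) : Prop :=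
  (∀ n, MemW1p0 N p (u n) (Du n) ∧ Radial N (u n) ∧
      (∫ x in unitBall N, ‖Du n x‖ ^ p) ^ (1 / p) ≤ 1) ∧
  ∀ ε : ℝ, 0 < ε →
    Tendsto (fun n => (∫ x in Metric.ball (0 : Euc N) ε, ‖Du n x‖ ^ p) ^ (1 / p)) atTop (nhds 1)

/-- `M_p`, the supremum over concentrating sequences of the limsup of `∫_B F_p(u_n)`. -/
def Mp (N : ℕ) (p : ℝ) : ℝ :=
  sSup { L : ℝ | ∃ u Du, ConcSeq N p u Du ∧
    L = limsup (fun n => ∫ x in unitBall N, Fp N p (u n x)) atTop }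

/-- The optimal Sobolev constant `S_p = inf ‖∇u‖_{L^p(B)} / ‖u‖_{L^{p*}(B)}`. -/
def Sp (N : ℕ) (p : ℝ) : ℝ :=
  sInf { r : ℝ | ∃ u Du, MemW1p0 N p u Du ∧
    ¬ (∀ᵐ x ∂(volume.restrict (unitBall N)), u x = 0) ∧
    r = (∫ x in unitBall N, ‖Du x‖ ^ p) ^ (1 / p) /
        (∫ x in unitBall N, |u x| ^ pstar N p) ^ (1 / pstar N p) }

/-- The Aubin--Talenti closed form value of `S_p`. -/
def SpFormula (N : ℕ) (p : ℝ) : ℝ :=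
  Real.sqrt π * (N : ℝ) ^ (1 / p) * (((N : ℝ) - p) / (p - 1)) ^ ((p - 1) / p) *
    (Real.Gamma ((N : ℝ) / p) * Real.Gamma ((N : ℝ) + 1 - (N : ℝ) / p) /
      (Real.Gamma (N : ℝ) * Real.Gamma (1 + (N : ℝ) / 2))) ^ (1 / (N : ℝ))

/-- Weak convergence `u_n ⇀ u_0` in `W^{1,p}_0(B)`, expressed by testing `u_n` and `∇u_n`
against arbitrary `L^{p'}` functions (equivalent to weak convergence since `W^{1,p}_0(B)`
embeds in `L^p × L^p` as a closed subspace). -/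
def WeakConvW1p0 (N : ℕ) (p : ℝ) (u : ℕ → Euc N → ℝ) (Du : ℕ → Euc N → Euc N)
    (u0 : Euc N → ℝ) (Du0 : Euc N → Euc N) : Prop :=
  (∀ φ : Euc N → ℝ, MemLp φ (ENNReal.ofReal (p / (p - 1))) (volume.restrict (unitBall N)) →
    Tendsto (fun n => ∫ x in unitBall N, u n x * φ x) atTop
      (nhds (∫ x in unitBall N, u0 x * φ x))) ∧
  (∀ Φ : Euc N → Euc N, MemLp Φ (ENNReal.ofReal (p / (p - 1))) (volume.restrict (unitBall N)) →
    Tendsto (fun n => ∫ x in unitBall N, (inner ℝ (Du n x) (Φ x) : ℝ)) atTop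
      (nhds (∫ x in unitBall N, (inner ℝ (Du0 x) (Φ x) : ℝ))))


/-! ### Auxiliary lemmas for statement 5 -/

lemma gammaProd (m : ℕ) {t : ℝ} (ht : t < 1) :
    Real.Gamma ((m : ℝ) + 1 - t) = Real.Gamma (1 - t) * ∏ k ∈ Finset.Icc 1 m, ((k : ℝ) - t) := by
  induction m with
  | zero => simp
  | succ n ih =>
    have hn0 : (0:ℝ) ≤ (n:ℝ) := Nat.cast_nonneg n
    have h0 : ((n : ℝ) + 1 - t) ≠ 0 := ne_of_gt (by linarith)
    have key : ((n+1 : ℕ) : ℝ) + 1 - t = (((n:ℝ) + 1 - t)) + 1 := by push_cast; ring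
    rw [key, Real.Gamma_add_one h0, ih, Finset.prod_Icc_succ_top (by omega : 1 ≤ n+1)]
    push_cast
    ring

lemma volB_pos (N : ℕ) : 0 < volB N := by
  unfold volB unitBall
  rw [ENNReal.toReal_pos_iff]
  exact ⟨Metric.measure_ball_pos _ _ one_pos, measure_ball_lt_top⟩

lemma volB_eq (N : ℕ) (hN : 2 ≤ N) :
    volB N = Real.sqrt π ^ N / Real.Gamma ((N:ℝ)/2 + 1) := by
  haveI : Nonempty (Fin N) := ⟨⟨0, by omega⟩⟩
  have hx : (0:ℝ) ≤ Real.sqrt π ^ N / Real.Gamma ((N:ℝ)/2 + 1) := by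
    have := Real.Gamma_pos_of_pos (show (0:ℝ) < (N:ℝ)/2 + 1 by positivity)
    positivity
  unfold volB unitBall
  rw [EuclideanSpace.volume_ball]
  simp [Fintype.card_fin, ENNReal.toReal_ofReal hx]

lemma hasDerivAt_f (N : ℕ) (hN : 2 ≤ N) :
    HasDerivAt (fun t : ℝ => Real.log (Real.Gamma (N : ℝ)) - Real.log (Real.Gamma (1 + t))
        - Real.log (Real.Gamma ((N : ℝ) - t)))
      (∑ k ∈ Finset.Icc 1 (N - 1), (1 : ℝ) / k) 0 := by
  -- derivative of t ↦ log Γ(1+t) at 0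
  have hd1 : ∀ m : ℕ, (1:ℝ) ≠ -m := by
    intro m h
    have : (0:ℝ) ≤ (m:ℝ) := Nat.cast_nonneg m
    linarith
  set c := deriv Real.Gamma 1 with hc
  have hdΓ : HasDerivAt Real.Gamma c 1 := (Real.differentiableAt_Gamma hd1).hasDerivAt
  have hinner1 : HasDerivAt (fun t : ℝ => 1 + t) 1 0 := (hasDerivAt_id 0).const_add 1
  have hcomp1 : HasDerivAt (fun t : ℝ => Real.Gamma (1 + t)) c 0 := by
    have := (show HasDerivAt Real.Gamma c ((fun t : ℝ => 1 + t) 0) by simpa using hdΓ).comp 0 hinner1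
    rw [mul_one] at this; exact this
  have hlog1 : HasDerivAt (fun t : ℝ => Real.log (Real.Gamma (1 + t))) c 0 := by
    have := hcomp1.log (by simp [Real.Gamma_one])
    simpa [Real.Gamma_one] using this
  have hinner2 : HasDerivAt (fun t : ℝ => 1 - t) (-1) 0 := by
    simpa using (hasDerivAt_id (0:ℝ)).const_sub 1
  have hcomp2 : HasDerivAt (fun t : ℝ => Real.Gamma (1 - t)) (-c) 0 := by
    have := (show HasDerivAt Real.Gamma c ((fun t : ℝ => 1 - t) 0) by simpa using hdΓ).comp 0 hinner2
    rw [mul_neg_one] at this; exact this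
  have hlog2 : HasDerivAt (fun t : ℝ => Real.log (Real.Gamma (1 - t))) (-c) 0 := by
    have := hcomp2.log (by simp [Real.Gamma_one])
    simpa [Real.Gamma_one] using this
  -- derivative of the sum part
  have hsum : HasDerivAt (fun t : ℝ => ∑ k ∈ Finset.Icc 1 (N-1),
      (Real.log (k:ℝ) - Real.log ((k:ℝ) - t))) (∑ k ∈ Finset.Icc 1 (N-1), (1:ℝ)/k) 0 := by
    apply HasDerivAt.fun_sum
    intro k hk
    have hk1 : 1 ≤ k := (Finset.mem_Icc.mp hk).1
    have hk0 : (0:ℝ) < (k:ℝ) := by exact_mod_cast hk1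
    have hinner : HasDerivAt (fun t : ℝ => (k:ℝ) - t) (-1) 0 := by
      simpa using (hasDerivAt_id (0:ℝ)).const_sub (k:ℝ)
    have hlog : HasDerivAt (fun t : ℝ => Real.log ((k:ℝ) - t)) ((-1) / ((k:ℝ) - 0)) 0 :=
      hinner.log (by simpa using hk0.ne')
    have := hlog.const_sub (Real.log (k:ℝ))
    convert this using 1
    field_simp
    rw [sub_zero, div_self hk0.ne']
  -- the auxiliary function f2
  have hf2 : HasDerivAt (fun t : ℝ => (∑ k ∈ Finset.Icc 1 (N-1),
      (Real.log (k:ℝ) - Real.log ((k:ℝ) - t))) - Real.log (Real.Gamma (1 + t))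
      - Real.log (Real.Gamma (1 - t)))
      (∑ k ∈ Finset.Icc 1 (N-1), (1:ℝ)/k) 0 := by
    have := (hsum.sub hlog1).sub hlog2
    exact this.congr_deriv (by ring)
  -- f agrees with f2 near 0
  have heq : (fun t : ℝ => Real.log (Real.Gamma (N : ℝ)) - Real.log (Real.Gamma (1 + t))
      - Real.log (Real.Gamma ((N : ℝ) - t))) =ᶠ[nhds (0:ℝ)]
      (fun t : ℝ => (∑ k ∈ Finset.Icc 1 (N-1),
      (Real.log (k:ℝ) - Real.log ((k:ℝ) - t))) - Real.log (Real.Gamma (1 + t))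
      - Real.log (Real.Gamma (1 - t))) := by
    have hmem : Set.Ioo (-(1:ℝ)/2) (1/2) ∈ nhds (0:ℝ) :=
      Ioo_mem_nhds (by norm_num) (by norm_num)
    filter_upwards [hmem] with t ht
    obtain ⟨ht1, ht2⟩ := ht
    have ht1' : t < 1 := by linarith
    have hcast : ((N - 1 : ℕ) : ℝ) = (N : ℝ) - 1 := by
      have : 1 ≤ N := by omega
      push_cast [this]; ring
    have hNt : ((N - 1 : ℕ) : ℝ) + 1 - t = (N : ℝ) - t := by rw [hcast]; ring
    have hne : ∀ k ∈ Finset.Icc 1 (N-1), ((k:ℝ) - t) ≠ 0 := by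
      intro k hk
      have hk1 : 1 ≤ k := (Finset.mem_Icc.mp hk).1
      have : (1:ℝ) ≤ (k:ℝ) := by exact_mod_cast hk1
      have : (0:ℝ) < (k:ℝ) - t := by linarith
      exact this.ne'
    have hne0 : ∀ k ∈ Finset.Icc 1 (N-1), ((k:ℝ)) ≠ 0 := by
      intro k hk
      have hk1 : 1 ≤ k := (Finset.mem_Icc.mp hk).1
      exact_mod_cast Nat.pos_of_ne_zero (by omega) |>.ne'
    have hp1 : Real.Gamma ((N:ℝ) - t)
        = Real.Gamma (1 - t) * ∏ k ∈ Finset.Icc 1 (N-1), ((k:ℝ) - t) := by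
      rw [← hNt]; exact gammaProd (N-1) ht1'
    have hp0 : Real.Gamma ((N:ℝ)) = ∏ k ∈ Finset.Icc 1 (N-1), ((k:ℝ)) := by
      have := gammaProd (N-1) (t := 0) (by norm_num)
      simp only [sub_zero, Real.Gamma_one, one_mul] at this
      rw [show ((N:ℝ)) = ((N-1:ℕ):ℝ) + 1 by rw [hcast]; ring]
      exact this
    have hΓpos : (0:ℝ) < Real.Gamma (1 - t) := Real.Gamma_pos_of_pos (by linarith)
    rw [hp1, hp0, Real.log_mul hΓpos.ne' (Finset.prod_ne_zero_iff.mpr hne),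
      Real.log_prod hne, Real.log_prod hne0, Finset.sum_sub_distrib]
    ring
  exact hf2.congr_of_eventuallyEq heq

lemma tendsto_g (N : ℕ) (hN : 2 ≤ N) :
    Tendsto (fun p : ℝ => p / ((N:ℝ) - p) * (Real.log (Real.Gamma (N:ℝ))
        - Real.log (Real.Gamma ((N:ℝ)/p)) - Real.log (Real.Gamma ((N:ℝ)+1-(N:ℝ)/p))))
      (nhdsWithin (N : ℝ) (Set.Iio (N : ℝ)))
      (nhds (∑ k ∈ Finset.Icc 1 (N - 1), (1 : ℝ) / k)) := by
  have hN0 : (0:ℝ) < N := by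
    have : 0 < N := by omega
    exact_mod_cast this
  have hslope := hasDerivAt_iff_tendsto_slope.mp (hasDerivAt_f N hN)
  have hpos : ∀ᶠ p in nhdsWithin (N:ℝ) (Set.Iio (N:ℝ)), 0 < p :=
    eventually_nhdsWithin_of_eventually_nhds (eventually_gt_nhds hN0)
  have hδ : Tendsto (fun p : ℝ => ((N:ℝ) - p)/p) (nhdsWithin (N:ℝ) (Set.Iio (N:ℝ)))
      (nhdsWithin (0:ℝ) {(0:ℝ)}ᶜ) := by
    rw [tendsto_nhdsWithin_iff]
    constructor
    · have hcont : ContinuousAt (fun p : ℝ => ((N:ℝ) - p)/p) N :=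
        (continuousAt_const.sub continuousAt_id).div continuousAt_id hN0.ne'
      have h' : Tendsto (fun p : ℝ => ((N:ℝ) - p)/p) (nhds (N:ℝ)) (nhds 0) := by
        have := hcont.tendsto
        simpa using this
      exact h'.mono_left nhdsWithin_le_nhds
    · filter_upwards [self_mem_nhdsWithin, hpos] with p hp hp0
      have hNp : (0:ℝ) < (N:ℝ) - p := by
        simp only [Set.mem_Iio] at hp; linarith
      exact (div_pos hNp hp0).ne'
  have hcompo := hslope.comp hδ
  apply Filter.Tendsto.congr' _ hcompo
  filter_upwards [self_mem_nhdsWithin, hpos] with p hp hp0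
  simp only [Set.mem_Iio] at hp
  have hNp : (0:ℝ) < (N:ℝ) - p := by linarith
  have e1 : 1 + ((N:ℝ) - p)/p = (N:ℝ)/p := by field_simp; ring
  have e2 : (N:ℝ) - ((N:ℝ) - p)/p = (N:ℝ) + 1 - (N:ℝ)/p := by field_simp; ring
  simp only [Function.comp_apply, slope_def_field, e1, e2, sub_zero, add_zero,
    Real.Gamma_one, Real.log_one, sub_self]
  rw [div_div_eq_mul_div]
  ring

theorem main_eq (N : ℕ) (hN : 2 ≤ N) {p : ℝ} (hp1 : (N:ℝ) - 1/2 < p) (hp2 : p < N) :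
    ((((N : ℝ) - p) / (N * (p - 1))) * alphaP N p) ^ ((N : ℝ) * (p - 1) / ((N : ℝ) - p)) *
      SpFormula N p ^ (-(pstar N p)) =
    volB N * Real.exp (p / ((N:ℝ) - p) * (Real.log (Real.Gamma (N:ℝ))
      - Real.log (Real.Gamma ((N:ℝ)/p)) - Real.log (Real.Gamma ((N:ℝ)+1-(N:ℝ)/p)))) := by
  have hN0 : (0:ℝ) < N := by
    have : 0 < N := by omega
    exact_mod_cast this
  have hN2 : (2:ℝ) ≤ N := by exact_mod_cast hN
  have hp0 : (0:ℝ) < p := by linarith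
  have hpm1 : (0:ℝ) < p - 1 := by linarith
  have hNp : (0:ℝ) < (N:ℝ) - p := by linarith
  have hN1 : (0:ℝ) < (N:ℝ) - 1 := by linarith
  have hB : 0 < volB N := volB_pos N
  have hω : 0 < sphArea N := by
    unfold sphArea; exact mul_pos hN0 hB
  have hαN : 0 < alphaN N := by
    unfold alphaN; exact mul_pos hN0 (Real.rpow_pos_of_pos hω _)
  have hX : 0 < alphaN N ^ (((N : ℝ) - 1) / N) * volB N ^ (1 / p - 1 / (N : ℝ)) :=
    mul_pos (Real.rpow_pos_of_pos hαN _) (Real.rpow_pos_of_pos hB _)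
  have hαp : 0 < alphaP N p := by
    unfold alphaP; exact Real.rpow_pos_of_pos hX _
  have hA : 0 < (((N : ℝ) - p) / (N * (p - 1))) * alphaP N p :=
    mul_pos (div_pos hNp (mul_pos hN0 hpm1)) hαp
  have hπ : (0:ℝ) < π := Real.pi_pos
  have hsq : 0 < Real.sqrt π := Real.sqrt_pos.mpr hπ
  have hNrp : 0 < (N:ℝ) ^ (1/p) := Real.rpow_pos_of_pos hN0 _
  have hq : (0:ℝ) < ((N:ℝ) - p) / (p - 1) := div_pos hNp hpm1
  have hqr : 0 < (((N:ℝ) - p) / (p - 1)) ^ ((p-1)/p) := Real.rpow_pos_of_pos hq _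
  have hG1 : 0 < Real.Gamma ((N:ℝ)/p) := Real.Gamma_pos_of_pos (div_pos hN0 hp0)
  have harg2 : (0:ℝ) < (N:ℝ) + 1 - (N:ℝ)/p := by
    have : (N:ℝ)/p < N := by
      rw [div_lt_iff₀ hp0]; nlinarith
    linarith
  have hG2 : 0 < Real.Gamma ((N:ℝ)+1-(N:ℝ)/p) := Real.Gamma_pos_of_pos harg2
  have hG3 : 0 < Real.Gamma ((N:ℝ)) := Real.Gamma_pos_of_pos hN0
  have hG4 : 0 < Real.Gamma (1 + (N:ℝ)/2) := Real.Gamma_pos_of_pos (by positivity)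
  have hD : 0 < Real.Gamma ((N:ℝ)/p) * Real.Gamma ((N:ℝ)+1-(N:ℝ)/p)
      / (Real.Gamma ((N:ℝ)) * Real.Gamma (1 + (N:ℝ)/2)) :=
    div_pos (mul_pos hG1 hG2) (mul_pos hG3 hG4)
  have hS : 0 < SpFormula N p := by
    unfold SpFormula
    exact mul_pos (mul_pos (mul_pos hsq hNrp) hqr) (Real.rpow_pos_of_pos hD _)
  -- log expansions
  have l_B : Real.log (volB N) = (N:ℝ)/2 * Real.log π - Real.log (Real.Gamma (1 + (N:ℝ)/2)) := by
    rw [volB_eq N hN, Real.log_div (by positivity) (Real.Gamma_pos_of_pos (by positivity)).ne',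
      Real.log_pow, Real.log_sqrt hπ.le]
    rw [show (N:ℝ)/2 + 1 = 1 + (N:ℝ)/2 by ring]
    ring
  have l_A : Real.log ((((N : ℝ) - p) / (N * (p - 1))) * alphaP N p)
      = (Real.log ((N:ℝ) - p) - (Real.log (N:ℝ) + Real.log (p-1)))
      + (p/(p-1)) * (((N:ℝ)-1)/N * (Real.log (N:ℝ)
          + 1/((N:ℝ)-1) * (Real.log (N:ℝ) + Real.log (volB N)))
        + (1/p - 1/(N:ℝ)) * Real.log (volB N)) := by
    rw [Real.log_mul (div_pos hNp (mul_pos hN0 hpm1)).ne' hαp.ne',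
      Real.log_div hNp.ne' (mul_pos hN0 hpm1).ne', Real.log_mul hN0.ne' hpm1.ne']
    congr 1
    unfold alphaP
    rw [Real.log_rpow hX, Real.log_mul (Real.rpow_pos_of_pos hαN _).ne'
      (Real.rpow_pos_of_pos hB _).ne', Real.log_rpow hαN, Real.log_rpow hB]
    congr 3
    unfold alphaN
    rw [Real.log_mul hN0.ne' (Real.rpow_pos_of_pos hω _).ne', Real.log_rpow hω]
    congr 2
    unfold sphArea
    rw [Real.log_mul hN0.ne' hB.ne']
  have l_S : Real.log (SpFormula N p)
      = Real.log π / 2 + 1/p * Real.log (N:ℝ)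
      + (p-1)/p * (Real.log ((N:ℝ) - p) - Real.log (p-1))
      + 1/(N:ℝ) * (Real.log (Real.Gamma ((N:ℝ)/p)) + Real.log (Real.Gamma ((N:ℝ)+1-(N:ℝ)/p))
        - Real.log (Real.Gamma ((N:ℝ))) - Real.log (Real.Gamma (1 + (N:ℝ)/2))) := by
    unfold SpFormula
    rw [Real.log_mul (mul_pos (mul_pos hsq hNrp) hqr).ne' (Real.rpow_pos_of_pos hD _).ne',
      Real.log_mul (mul_pos hsq hNrp).ne' hqr.ne', Real.log_mul hsq.ne' hNrp.ne',
      Real.log_sqrt hπ.le, Real.log_rpow hN0, Real.log_rpow hq, Real.log_rpow hD,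
      Real.log_div hNp.ne' hpm1.ne',
      Real.log_div (mul_pos hG1 hG2).ne' (mul_pos hG3 hG4).ne',
      Real.log_mul hG1.ne' hG2.ne', Real.log_mul hG3.ne' hG4.ne']
    ring
  -- reduce to a log identity
  rw [Real.rpow_def_of_pos hA, Real.rpow_def_of_pos hS, ← Real.exp_add,
    show volB N = Real.exp (Real.log (volB N)) from (Real.exp_log hB).symm, ← Real.exp_add,
    Real.exp_eq_exp]
  unfold pstar
  rw [l_A, l_S, l_B]
  have h1 : p ≠ 0 := hp0.ne'
  have h2 : p - 1 ≠ 0 := hpm1.ne'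
  have h3 : (N:ℝ) - p ≠ 0 := hNp.ne'
  have h4 : (N:ℝ) ≠ 0 := hN0.ne'
  have h5 : (N:ℝ) - 1 ≠ 0 := hN1.ne'
  field_simp
  ring

/-- `|B| + [((N-p)/(N(p-1))) α_p]^{N(p-1)/(N-p)} S_p^{-p*}` (with the
Aubin--Talenti value of `S_p`) tends to `|B|(1 + e^{Σ_{k=1}^{N-1} 1/k})` as `p → N⁻`. -/
theorem stmt5 (N : ℕ) (hN : 2 ≤ N) :
    Tendsto (fun p : ℝ => volB N + ((((N : ℝ) - p) / (N * (p - 1))) * alphaP N p) ^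
        ((N : ℝ) * (p - 1) / ((N : ℝ) - p)) * SpFormula N p ^ (-(pstar N p)))
      (nhdsWithin (N : ℝ) (Set.Iio (N : ℝ)))
      (nhds (volB N * (1 + Real.exp (∑ k ∈ Finset.Icc 1 (N - 1), (1 : ℝ) / k)))) := by
  have hN2 : (2:ℝ) ≤ N := by exact_mod_cast hN
  have hg := tendsto_g N hN
  have h2 : Tendsto (fun p : ℝ => volB N + volB N * Real.exp (p / ((N:ℝ) - p) *
      (Real.log (Real.Gamma (N:ℝ)) - Real.log (Real.Gamma ((N:ℝ)/p))
        - Real.log (Real.Gamma ((N:ℝ)+1-(N:ℝ)/p)))))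
      (nhdsWithin (N : ℝ) (Set.Iio (N : ℝ)))
      (nhds (volB N + volB N * Real.exp (∑ k ∈ Finset.Icc 1 (N - 1), (1 : ℝ) / k))) :=
    tendsto_const_nhds.add (tendsto_const_nhds.mul
      ((Real.continuous_exp.tendsto _).comp hg))
  have heq : ∀ᶠ p in nhdsWithin (N : ℝ) (Set.Iio (N : ℝ)),
      volB N + volB N * Real.exp (p / ((N:ℝ) - p) *
        (Real.log (Real.Gamma (N:ℝ)) - Real.log (Real.Gamma ((N:ℝ)/p))
          - Real.log (Real.Gamma ((N:ℝ)+1-(N:ℝ)/p))))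
      = volB N + ((((N : ℝ) - p) / (N * (p - 1))) * alphaP N p) ^
        ((N : ℝ) * (p - 1) / ((N : ℝ) - p)) * SpFormula N p ^ (-(pstar N p)) := by
    filter_upwards [self_mem_nhdsWithin,
      eventually_nhdsWithin_of_eventually_nhds (eventually_gt_nhds
        (show (N:ℝ) - 1/2 < N by linarith))] with p hp hp1
    simp only [Set.mem_Iio] at hp
    rw [main_eq N hN hp1 hp]
  have hfinal := Filter.Tendsto.congr' heq h2
  convert hfinal using 2
  ring

end
end

section
/- If 2N/(N+1) < p < N, then there exist positive constants C1, C2 (depending on p, N, |B|) such that for every s ∈ ℝ, F_p(s) ≤ 1 + [((N−p)/(N(p−1))) α_p]^{N(p−1)/(N−p)} |s|^{p*} + C1 |s|^{p/(p−1)} + C2 |s|^{p* − p/(p−1)}. -/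
open Real MeasureTheory Filter Topology

noncomputable section

lemma aux_pow (m : ℕ) {y : ℝ} (h0 : 0 ≤ y) (h1 : y ≤ 1) :
    (1 + y) ^ m ≤ 1 + (2 ^ m - 1) * y := by
  induction m with
  | zero => simp
  | succ m ih =>
    have h2 : (1:ℝ) ≤ 2 ^ m := one_le_pow₀ (by norm_num)
    calc (1+y)^(m+1) = (1+y)^m * (1+y) := by ring
      _ ≤ (1 + (2^m - 1)*y) * (1+y) :=
          mul_le_mul_of_nonneg_right ih (by linarith)
      _ = 1 + 2^m * y + (2^m - 1) * y^2 := by ring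
      _ ≤ 1 + 2^m * y + (2^m - 1) * y := by
          have hy2 : y^2 ≤ y := by nlinarith
          nlinarith [mul_le_mul_of_nonneg_left hy2 (by linarith : (0:ℝ) ≤ 2^m - 1)]
      _ = 1 + (2^(m+1) - 1)*y := by ring

lemma key_ineq {q : ℝ} (hq : 0 ≤ q) {x : ℝ} (hx : 0 ≤ x) :
    (1 + x) ^ q ≤ 1 + x ^ q + 2 ^ ⌈q⌉₊ * x + 2 ^ ⌈q⌉₊ * x ^ (q - 1) := by
  have hxq : 0 ≤ x ^ q := Real.rpow_nonneg hx _
  have hxq1 : 0 ≤ x ^ (q - 1) := Real.rpow_nonneg hx _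
  have hC : (1:ℝ) ≤ 2 ^ ⌈q⌉₊ := one_le_pow₀ (by norm_num)
  rcases le_or_gt x 1 with h | h
  · have h1 : (1+x)^q ≤ (1+x) ^ ((⌈q⌉₊ : ℕ) : ℝ) :=
      Real.rpow_le_rpow_of_exponent_le (by linarith) (Nat.le_ceil q)
    rw [Real.rpow_natCast] at h1
    have h2 := aux_pow ⌈q⌉₊ hx h
    nlinarith
  · have hx0 : 0 < x := lt_trans one_pos h
    have hinv0 : 0 ≤ x⁻¹ := by positivity
    have hinv1 : x⁻¹ ≤ 1 := by
      rw [inv_le_one_iff₀]; right; linarith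
    have h1 : (1+x)^q = x^q * (1 + x⁻¹)^q := by
      rw [← Real.mul_rpow hx (by linarith)]
      congr 1
      field_simp
      ring
    have h2 : (1+x⁻¹)^q ≤ (1+x⁻¹) ^ ((⌈q⌉₊ : ℕ) : ℝ) :=
      Real.rpow_le_rpow_of_exponent_le (by linarith) (Nat.le_ceil q)
    rw [Real.rpow_natCast] at h2
    have h3 := aux_pow ⌈q⌉₊ hinv0 hinv1
    have h4 : x^q * x⁻¹ = x ^ (q - 1) := by
      rw [Real.rpow_sub hx0, Real.rpow_one, div_eq_mul_inv]
    calc (1+x)^q = x^q * (1 + x⁻¹)^q := h1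
      _ ≤ x^q * (1 + (2^⌈q⌉₊ - 1) * x⁻¹) :=
          mul_le_mul_of_nonneg_left (le_trans h2 h3) hxq
      _ = x^q + (2^⌈q⌉₊ - 1) * (x^q * x⁻¹) := by ring
      _ = x^q + (2^⌈q⌉₊ - 1) * x^(q-1) := by rw [h4]
      _ ≤ 1 + x ^ q + 2 ^ ⌈q⌉₊ * x + 2 ^ ⌈q⌉₊ * x ^ (q - 1) := by nlinarith

/-- if `2N/(N+1) < p < N` then there are `C₁, C₂ > 0` with
`F_p(s) ≤ 1 + [((N-p)/(N(p-1))) α_p]^{N(p-1)/(N-p)} |s|^{p*}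
  + C₁ |s|^{p/(p-1)} + C₂ |s|^{p* - p/(p-1)}` for all `s`. -/
theorem stmt12 (N : ℕ) (hN : 2 ≤ N) (p : ℝ)
    (hp : 2 * (N : ℝ) / ((N : ℝ) + 1) < p) (hpN : p < N) :
    ∃ C1 C2 : ℝ, 0 < C1 ∧ 0 < C2 ∧ ∀ s : ℝ,
      Fp N p s ≤ 1 + ((((N : ℝ) - p) / (N * (p - 1))) * alphaP N p) ^
          ((N : ℝ) * (p - 1) / ((N : ℝ) - p)) * |s| ^ pstar N p
        + C1 * |s| ^ (p / (p - 1)) + C2 * |s| ^ (pstar N p - p / (p - 1)) := by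
  have hN2 : (2:ℝ) ≤ (N:ℝ) := by exact_mod_cast hN
  have hN0 : (0:ℝ) < N := by linarith
  have hp1 : 1 < p := by
    have : (1:ℝ) < 2 * N / (N + 1) := by
      rw [lt_div_iff₀ (by linarith)]; linarith
    linarith
  have hNp : (0:ℝ) < (N:ℝ) - p := by linarith
  have hp1' : p - 1 ≠ 0 := by linarith
  have hNp' : (N:ℝ) - p ≠ 0 := ne_of_gt hNp
  -- positivity of volB
  have hvol : 0 < volB N := by
    unfold volB unitBall
    have h1 : 0 < volume (Metric.ball (0 : Euc N) 1) :=
      Metric.measure_ball_pos _ _ one_pos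
    exact ENNReal.toReal_pos h1.ne' measure_ball_lt_top.ne
  have hsph : 0 < sphArea N := by
    unfold sphArea; positivity
  have halphaN : 0 < alphaN N := by
    unfold alphaN
    have := Real.rpow_pos_of_pos hsph (1 / ((N : ℝ) - 1))
    positivity
  have halphaP : 0 < alphaP N p := by
    unfold alphaP
    have h1 := Real.rpow_pos_of_pos halphaN (((N : ℝ) - 1) / N)
    have h2 := Real.rpow_pos_of_pos hvol (1 / p - 1 / (N : ℝ))
    exact Real.rpow_pos_of_pos (mul_pos h1 h2) _
  set q : ℝ := (N : ℝ) * (p - 1) / ((N : ℝ) - p) with hq_def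
  have hq : 0 ≤ q := by
    apply div_nonneg (by nlinarith) (by linarith)
  set a : ℝ := (((N : ℝ) - p) / (N * (p - 1))) * alphaP N p with ha_def
  have ha : 0 < a := by
    apply mul_pos _ halphaP
    apply div_pos hNp (by nlinarith)
  set C : ℝ := 2 ^ ⌈q⌉₊ with hC_def
  have hC : (1:ℝ) ≤ C := one_le_pow₀ (by norm_num)
  refine ⟨C * a, C * a ^ (q - 1), by positivity,
    mul_pos (by linarith) (Real.rpow_pos_of_pos ha _), fun s => ?_⟩
  set t : ℝ := |s| ^ (p / (p - 1)) with ht_def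
  have ht : 0 ≤ t := Real.rpow_nonneg (abs_nonneg s) _
  have hx : 0 ≤ a * t := by positivity
  have hkey := key_ineq hq hx
  -- exponent identities
  have he1 : p / (p - 1) * q = pstar N p := by
    unfold pstar
    rw [hq_def]
    field_simp
  have he2 : p / (p - 1) * (q - 1) = pstar N p - p / (p - 1) := by
    rw [← he1]; ring
  have htq : t ^ q = |s| ^ pstar N p := by
    rw [ht_def, ← Real.rpow_mul (abs_nonneg s), he1]
  have htq1 : t ^ (q - 1) = |s| ^ (pstar N p - p / (p - 1)) := by
    rw [ht_def, ← Real.rpow_mul (abs_nonneg s), he2]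
  have hFp : Fp N p s = (1 + a * t) ^ q := by
    unfold Fp
    rw [hq_def, ha_def, ht_def, mul_assoc]
  have hmul1 : (a * t) ^ q = a ^ q * t ^ q := Real.mul_rpow ha.le ht
  have hmul2 : (a * t) ^ (q - 1) = a ^ (q - 1) * t ^ (q - 1) :=
    Real.mul_rpow ha.le ht
  rw [hFp]
  calc (1 + a * t) ^ q
      ≤ 1 + (a * t) ^ q + C * (a * t) + C * (a * t) ^ (q - 1) := hkey
    _ = 1 + a ^ q * |s| ^ pstar N p + C * a * t
        + C * a ^ (q - 1) * |s| ^ (pstar N p - p / (p - 1)) := by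
        rw [hmul1, hmul2, htq, htq1]; ring
    _ = 1 + a ^ q * |s| ^ pstar N p + C * a * |s| ^ (p / (p - 1))
        + C * a ^ (q - 1) * |s| ^ (pstar N p - p / (p - 1)) := by rw [ht_def]

end
end
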